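/- arXiv:2209.01403 — 3 statements merged into one kernel-verified Lean document; each statement's English description precedes it below -/
import Mathlib

section
/- Let Φ = {p_1,…,p_n, p̄_1,…,p̄_n, q_1,…,q_m} and ψ := (⋀_{i=1}^n (p_i ∨ p̄_i)) ∧ (θ ∨ ⋁_{i=1}^n (p_i ∧ p̄_i)). If χ is a conjunction of at most n distinct atoms from Φ with χ ⊨ ψ, then χ contains exactly n atoms, it contains no q_j, and for each i ∈ {1,…,n} it contains exactly one of p_i and p̄_i. -/
inductive PForm (α : Type) : Type where
  | tr : PForm α
  | fls : PForm α
  | atom : α → PForm α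
  | neg : PForm α → PForm α
  | conj : PForm α → PForm α → PForm α
  | disj : PForm α → PForm α → PForm α

namespace PForm

def eval {α : Type} (s : α → Bool) : PForm α → Bool
  | tr => true
  | fls => false
  | atom p => s p
  | neg φ => !(φ.eval s)
  | conj φ ψ => φ.eval s && ψ.eval s
  | disj φ ψ => φ.eval s || ψ.eval s

def atoms {α : Type} [DecidableEq α] : PForm α → Finset α
  | tr => ∅
  | fls => ∅
  | atom p => {p}
  | neg φ => φ.atoms
  | conj φ ψ => φ.atoms ∪ ψ.atoms
  | disj φ ψ => φ.atoms ∪ ψ.atoms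

/-- Negation-free formulas: built from atoms using only ∧ and ∨. -/
def NegFree {α : Type} : PForm α → Prop
  | atom _ => True
  | conj φ ψ => φ.NegFree ∧ ψ.NegFree
  | disj φ ψ => φ.NegFree ∧ ψ.NegFree
  | _ => False

def map {α β : Type} (f : α → β) : PForm α → PForm β
  | tr => tr
  | fls => fls
  | atom p => atom (f p)
  | neg φ => neg (φ.map f)
  | conj φ ψ => conj (φ.map f) (ψ.map f)
  | disj φ ψ => disj (φ.map f) (ψ.map f)

def subst {α : Type} (f : α → PForm α) : PForm α → PForm α
  | tr => tr
  | fls => fls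
  | atom p => f p
  | neg φ => neg (φ.subst f)
  | conj φ ψ => conj (φ.subst f) (ψ.subst f)
  | disj φ ψ => disj (φ.subst f) (ψ.subst f)

end PForm

/-- Logical entailment: every assignment satisfying φ satisfies ψ. -/
def Entails {α : Type} (φ ψ : PForm α) : Prop :=
  ∀ s : α → Bool, φ.eval s = true → ψ.eval s = true

def bigConj {α : Type} (l : List (PForm α)) : PForm α := l.foldr PForm.conj PForm.tr
def bigDisj {α : Type} (l : List (PForm α)) : PForm α := l.foldr PForm.disj PForm.fls

/-- A literal (p, true) is the atom p; (p, false) is ¬p. -/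
def litForm {α : Type} (l : α × Bool) : PForm α :=
  if l.2 then PForm.atom l.1 else PForm.neg (PForm.atom l.1)

def conjLits {α : Type} (L : List (α × Bool)) : PForm α := bigConj (L.map litForm)
def disjLits {α : Type} (L : List (α × Bool)) : PForm α := bigDisj (L.map litForm)

/-- The maximal conjunction w.r.t. Φ corresponding to assignment s. -/
noncomputable def maxConj {α : Type} [DecidableEq α] (Φ : Finset α) (s : α → Bool) : PForm α :=
  conjLits (Φ.toList.map fun p => (p, s p))

/-!
Under the assignment making exactly the atoms of `χ` true, `χ` holds, hence so does the first
conjunct of `ψ`: `χ` meets every pair `{pᵢ, p̄ᵢ}`. These `n` pairs are pairwise disjoint and `χ`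
has at most `n` atoms, so `χ` consists of exactly one atom from each pair.
-/

open Function Finset

section Transversal

variable {ι α : Type*} [DecidableEq α] {f g : ι → α} {χ : Finset α}

def pairChoice (f : ι → α) (χ : Finset α) (i : ι) : ι ⊕ ι :=
  if f i ∈ χ then .inl i else .inr i

theorem pairChoice_injective : Injective (pairChoice f χ) :=
  LeftInverse.injective (g := Sum.elim id id) fun i => by unfold pairChoice; split_ifs <;> rfl

variable [Fintype ι]

theorem image_pairChoice_eq (hfg : Injective (Sum.elim f g))
    (hcover : ∀ i, f i ∈ χ ∨ g i ∈ χ) (hcard : #χ ≤ Fintype.card ι) :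
    univ.image (Sum.elim f g ∘ pairChoice f χ) = χ := by
  refine eq_of_subset_of_card_le ?_ ?_
  · intro x hx
    obtain ⟨i, -, rfl⟩ := mem_image.mp hx
    simp only [comp_apply, pairChoice]
    split_ifs with hi
    exacts [hi, (hcover i).resolve_left hi]
  · rwa [card_image_of_injective _ (hfg.comp pairChoice_injective), card_univ]

theorem card_eq_of_forall_mem_or_mem (hfg : Injective (Sum.elim f g))
    (hcover : ∀ i, f i ∈ χ ∨ g i ∈ χ) (hcard : #χ ≤ Fintype.card ι) :
    #χ = Fintype.card ι := by
  rw [← image_pairChoice_eq hfg hcover hcard,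
    card_image_of_injective _ (hfg.comp pairChoice_injective), card_univ]

theorem mem_range_of_forall_mem_or_mem (hfg : Injective (Sum.elim f g))
    (hcover : ∀ i, f i ∈ χ ∨ g i ∈ χ) (hcard : #χ ≤ Fintype.card ι) {x : α} (hx : x ∈ χ) :
    x ∈ Set.range (Sum.elim f g) := by
  rw [← image_pairChoice_eq hfg hcover hcard] at hx
  obtain ⟨i, -, rfl⟩ := mem_image.mp hx
  exact Set.mem_range_self _

theorem notMem_of_forall_mem_or_mem (hfg : Injective (Sum.elim f g))
    (hcover : ∀ i, f i ∈ χ ∨ g i ∈ χ) (hcard : #χ ≤ Fintype.card ι) {i : ι} (hi : f i ∈ χ) :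
    g i ∉ χ := by
  intro hgi
  rw [← image_pairChoice_eq hfg hcover hcard] at hgi
  obtain ⟨j, -, hj⟩ := mem_image.mp hgi
  have hji := hfg (a₂ := .inr i) hj
  unfold pairChoice at hji
  split_ifs at hji with hj'
  cases hji
  exact hj' hi

end Transversal

theorem eval_bigConj_eq_true_iff {α : Type} (s : α → Bool) (l : List (PForm α)) :
    (bigConj l).eval s = true ↔ ∀ φ ∈ l, φ.eval s = true := by
  induction l with
  | nil => simp [bigConj, PForm.eval]
  | cons φ l ih => simp_all [bigConj, PForm.eval]

theorem Entails.eval_mem_of_bigConj_atoms {α : Type} [DecidableEq α] {χ : Finset α}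
    {ψ : PForm α} (h : Entails (bigConj (χ.toList.map PForm.atom)) ψ) :
    ψ.eval (fun x => decide (x ∈ χ)) = true :=
  h _ <| (eval_bigConj_eq_true_iff _ _).mpr <| by simp [PForm.eval]

theorem stmt_9 (n m : ℕ) (θ : PForm (Fin n ⊕ Fin m))
    (p : Fin n → (Fin n ⊕ (Fin n ⊕ Fin m)))
    (pbar : Fin n → (Fin n ⊕ (Fin n ⊕ Fin m)))
    (q : Fin m → (Fin n ⊕ (Fin n ⊕ Fin m)))
    (hp : p = fun i => Sum.inl i)
    (hpbar : pbar = fun i => Sum.inr (Sum.inl i))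
    (hq : q = fun j => Sum.inr (Sum.inr j))
    (χ : Finset (Fin n ⊕ (Fin n ⊕ Fin m))) (hcard : χ.card ≤ n)
    (hent : Entails (bigConj (χ.toList.map PForm.atom))
      (PForm.conj
        (bigConj ((List.finRange n).map fun i =>
          PForm.disj (PForm.atom (p i)) (PForm.atom (pbar i))))
        (PForm.disj
          (θ.map (fun x => match x with
            | Sum.inl i => p i
            | Sum.inr j => q j))
          (bigDisj ((List.finRange n).map fun i =>
            PForm.conj (PForm.atom (p i)) (PForm.atom (pbar i))))))) :
    χ.card = n ∧ (∀ j : Fin m, q j ∉ χ) ∧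
      ∀ i : Fin n, (p i ∈ χ ∧ pbar i ∉ χ) ∨ (pbar i ∈ χ ∧ p i ∉ χ) := by
  subst hp hpbar hq
  have hcover : ∀ i : Fin n, (Sum.inl i : Fin n ⊕ (Fin n ⊕ Fin m)) ∈ χ ∨ .inr (.inl i) ∈ χ := by
    have h := hent.eval_mem_of_bigConj_atoms
    simp only [PForm.eval, Bool.and_eq_true, eval_bigConj_eq_true_iff] at h
    simpa [PForm.eval] using h.1
  have hinj : Injective (Sum.elim (fun i : Fin n => (Sum.inl i : Fin n ⊕ (Fin n ⊕ Fin m)))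
      fun i => .inr (.inl i)) :=
    Sum.inl_injective.sumElim (Sum.inr_injective.comp Sum.inl_injective) fun _ _ => Sum.inl_ne_inr
  have hcard' : #χ ≤ Fintype.card (Fin n) := by simpa using hcard
  refine ⟨by simpa using card_eq_of_forall_mem_or_mem hinj hcover hcard', ?_, fun i => ?_⟩
  · intro j hj
    obtain ⟨i | i, hi⟩ := mem_range_of_forall_mem_or_mem hinj hcover hcard' hj <;> cases hi
  · rcases hcover i with hi | hi
    · exact .inl ⟨hi, notMem_of_forall_mem_or_mem hinj hcover hcard' hi⟩
    · exact .inr ⟨hi, fun hi' => notMem_of_forall_mem_or_mem hinj hcover hcard' hi' hi⟩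
end

section
/- Let ψ be a propositional formula over a finite set Φ, let q ∉ Φ be a fresh proposition symbol, and let φ_q := q ∨ ⋁_{p ∈ Φ} ¬p. Suppose the all-true assignment on Φ does not satisfy ψ. Then (ψ ∧ ¬q) ⊨ φ_q, and q is an interpolant between ψ ∧ ¬q and φ_q (i.e., ψ ∧ ¬q ⊨ q and q ⊨ φ_q) if and only if ψ is unsatisfiable. -/
lemma eval_congr {α : Type} [DecidableEq α] (φ : PForm α) (s t : α → Bool)
    (h : ∀ p ∈ φ.atoms, s p = t p) : φ.eval s = φ.eval t := by
  induction φ with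
  | tr => rfl
  | fls => rfl
  | atom p => exact h p (by simp [PForm.atoms])
  | neg φ ih => simp [PForm.eval, ih (fun p hp => h p hp)]
  | conj φ χ ih1 ih2 =>
      simp [PForm.eval, PForm.atoms] at *
      rw [ih1 (fun p hp => h p (Or.inl hp)), ih2 (fun p hp => h p (Or.inr hp))]
  | disj φ χ ih1 ih2 =>
      simp [PForm.eval, PForm.atoms] at *
      rw [ih1 (fun p hp => h p (Or.inl hp)), ih2 (fun p hp => h p (Or.inr hp))]

lemma bigDisj_eval {α : Type} (l : List (PForm α)) (s : α → Bool) :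
    (bigDisj l).eval s = true ↔ ∃ φ ∈ l, φ.eval s = true := by
  induction l with
  | nil => simp [bigDisj, PForm.eval]
  | cons a l ih => simp [bigDisj, PForm.eval] at *; rw [ih]

theorem stmt_10 {α : Type} [DecidableEq α] (Φ : Finset α) (hne : Φ.Nonempty)
    (q : α) (hq : q ∉ Φ) (ψ : PForm α) (hψ : ψ.atoms ⊆ Φ)
    (hfalse : ψ.eval (fun _ => true) = false) :
    let φq : PForm α :=
      PForm.disj (PForm.atom q) (bigDisj (Φ.toList.map fun p => PForm.neg (PForm.atom p)))
    Entails (PForm.conj ψ (PForm.neg (PForm.atom q))) φq ∧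
    ((Entails (PForm.conj ψ (PForm.neg (PForm.atom q))) (PForm.atom q) ∧
        Entails (PForm.atom q) φq) ↔
      ∀ s : α → Bool, ψ.eval s = false) := by
  intro φq
  have hmain : Entails (PForm.conj ψ (PForm.neg (PForm.atom q))) φq := by
    intro s hs
    simp [PForm.eval] at hs
    by_cases hall : ∀ p ∈ Φ, s p = true
    · have := eval_congr ψ s (fun _ => true) (fun p hp => hall p (hψ hp))
      rw [hfalse] at this; rw [hs.1] at this; exact absurd this (by simp)
    · push_neg at hall
      obtain ⟨p, hp, hsp⟩ := hall
      simp [φq, PForm.eval, bigDisj_eval]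
      right
      exact ⟨p, hp, by simpa using hsp⟩
  refine ⟨hmain, ?_⟩
  constructor
  · rintro ⟨h1, _⟩ s
    by_contra hs
    simp at hs
    set s' : α → Bool := fun p => if p = q then false else s p with hs'
    have heq : ψ.eval s' = ψ.eval s := by
      apply eval_congr
      intro p hp
      have : p ≠ q := fun h => hq (h ▸ hψ hp)
      simp [hs', this]
    have hc : (PForm.conj ψ (PForm.neg (PForm.atom q))).eval s' = true := by
      simp only [PForm.eval]
      rw [heq, hs]
      simp [hs']
    have := h1 s' hc
    simp [PForm.eval, hs'] at this
  · intro hunsat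
    constructor
    · intro s hs
      simp [PForm.eval] at hs
      exact absurd hs.1 (by simp [hunsat s])
    · intro s hs
      simp [φq, PForm.eval] at hs ⊢
      exact Or.inl hs
end

section
/- Let G = (V,E) be a finite graph, let ψ := ⋀_{v ∈ V} (p_v ∨ ⋁_{(v,u) ∈ E} p_u), and for D ⊆ V let χ_D := ⋀_{v ∈ D} p_v. Then χ_D ⊨ ψ if and only if D is a dominating set of G. Consequently, with φ := ⋀_{v ∈ V} p_v, there exists a conjunction of at most k positive atoms that is an interpolant between φ and ψ if and only if G has a dominating set of size at most k. -/
lemma bigConj_eval {α : Type} (l : List (PForm α)) (s : α → Bool) :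
    (bigConj l).eval s = true ↔ ∀ φ ∈ l, φ.eval s = true := by
  induction l with
  | nil => simp [bigConj, PForm.eval]
  | cons a t ih =>
    simp [bigConj, PForm.eval, Bool.and_eq_true] at *
    tauto

theorem stmt_12 {V : Type} [Fintype V] [DecidableEq V]
    (G : SimpleGraph V) [DecidableRel G.Adj] :
    let ψ : PForm V := bigConj ((Finset.univ : Finset V).toList.map fun v =>
      PForm.disj (PForm.atom v) (bigDisj ((G.neighborFinset v).toList.map PForm.atom)))
    let φ : PForm V := bigConj ((Finset.univ : Finset V).toList.map PForm.atom)
    (∀ D : Finset V,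
        Entails (bigConj (D.toList.map PForm.atom)) ψ ↔
          ∀ v : V, v ∉ D → ∃ u ∈ D, G.Adj v u) ∧
    ∀ k : ℕ,
      (∃ D : Finset V, D.card ≤ k ∧
          Entails φ (bigConj (D.toList.map PForm.atom)) ∧
          Entails (bigConj (D.toList.map PForm.atom)) ψ) ↔
        ∃ D : Finset V, D.card ≤ k ∧ ∀ v : V, v ∉ D → ∃ u ∈ D, G.Adj v u := by
  intro ψ φ
  have hχ : ∀ (D : Finset V) (s : V → Bool),
      (bigConj (D.toList.map PForm.atom)).eval s = true ↔ ∀ v ∈ D, s v = true := by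
    intro D s
    rw [bigConj_eval]
    simp [PForm.eval]
  have hψ : ∀ s : V → Bool, ψ.eval s = true ↔
      ∀ v : V, s v = true ∨ ∃ u ∈ G.neighborFinset v, s u = true := by
    intro s
    rw [bigConj_eval]
    simp [PForm.eval, bigDisj_eval]
  have main : ∀ D : Finset V,
      Entails (bigConj (D.toList.map PForm.atom)) ψ ↔
        ∀ v : V, v ∉ D → ∃ u ∈ D, G.Adj v u := by
    intro D
    constructor
    · intro h v hv
      have := h (fun u => decide (u ∈ D)) (by rw [hχ]; intro u hu; simp [hu])
      rw [hψ] at this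
      rcases this v with h1 | ⟨u, hu, hu2⟩
      · simp at h1; exact absurd h1 hv
      · simp at hu2
        exact ⟨u, hu2, (G.mem_neighborFinset v u).mp hu⟩
    · intro hdom s hs
      rw [hχ] at hs
      rw [hψ]
      intro v
      by_cases hv : v ∈ D
      · exact Or.inl (hs v hv)
      · obtain ⟨u, hu, hadj⟩ := hdom v hv
        exact Or.inr ⟨u, (G.mem_neighborFinset v u).mpr hadj, hs u hu⟩
  refine ⟨main, fun k => ⟨?_, ?_⟩⟩
  · rintro ⟨D, hk, _, h2⟩
    exact ⟨D, hk, (main D).mp h2⟩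
  · rintro ⟨D, hk, hdom⟩
    refine ⟨D, hk, ?_, (main D).mpr hdom⟩
    intro s hs
    rw [hχ]
    intro v _
    have := (hχ Finset.univ s).mp hs
    exact this v (Finset.mem_univ v)
end
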